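/- Let G be a group with a normal subgroup R that has trivial center, and let π : G → G/R be the quotient map. Then the centralizer Λ of R in G is a normal subgroup of G, and the restriction of π to Λ is an isomorphism onto the kernel of the monodromy morphism G/R → Out(R) induced by conjugation. -/

import Mathlib

/-- The inner automorphism group of `R`. -/
def innerAut (R : Type*) [Group R] : Subgroup (MulAut R) := (MulAut.conj : R →* MulAut R).range

instance (R : Type*) [Group R] : (innerAut R).Normal := by
  constructor
  rintro σ ⟨r, rfl⟩ τ
  refine ⟨τ r, ?_⟩
  ext x
  simp [MulAut.conj, mul_assoc]

/-- The outer automorphism group of `R`. -/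
def OutAut (R : Type*) [Group R] := MulAut R ⧸ innerAut R

instance (R : Type*) [Group R] : Group (OutAut R) := by unfold OutAut; infer_instance


/-!
Conjugation `G →* Aut(R)` has kernel the centralizer `Λ` of `R` and maps `R` onto `Inn(R)`, so the
preimage of `Inn(R)` is `RΛ`; hence the kernel of the monodromy is `π(RΛ) = π(Λ)`. Trivial center
means `R ∩ Λ = 1`, which is exactly injectivity of `π` on `Λ`.
-/

namespace Subgroup

variable {G : Type*} [Group G]

theorem disjoint_centralizer_self_of_center_eq_bot {H : Subgroup G} (h : center H = ⊥) :
    Disjoint H (centralizer (H : Set G)) := by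
  rw [disjoint_iff_inf_le]
  rintro g ⟨hgH, hgC⟩
  have : (⟨g, hgH⟩ : H) ∈ center H :=
    mem_center_iff.mpr fun r => Subtype.ext (hgC r r.2)
  rw [h, mem_bot] at this
  exact congrArg Subtype.val this

variable (R : Subgroup G) [R.Normal]

theorem ker_conjNormal :
    (MulAut.conjNormal : G →* MulAut R).ker = centralizer (R : Set G) := by
  ext g
  simp only [MonoidHom.mem_ker, mem_centralizer_iff, MulEquiv.ext_iff, Subtype.ext_iff,
    MulAut.conjNormal_apply, MulAut.one_apply, Subtype.forall, mul_inv_eq_iff_eq_mul]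
  exact forall₂_congr fun _ _ => eq_comm

theorem map_conjNormal_eq_innerAut :
    R.map (MulAut.conjNormal : G →* MulAut R) = innerAut R := by
  ext σ
  simp only [mem_map, innerAut, MonoidHom.mem_range]
  constructor
  · rintro ⟨g, hg, rfl⟩
    exact ⟨⟨g, hg⟩, MulAut.conjNormal_val.symm⟩
  · rintro ⟨r, rfl⟩
    exact ⟨r, r.2, MulAut.conjNormal_val⟩

theorem comap_conjNormal_innerAut_eq_sup_centralizer :
    (innerAut R).comap (MulAut.conjNormal : G →* MulAut R) = R ⊔ centralizer (R : Set G) := by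
  rw [← map_conjNormal_eq_innerAut, comap_map_eq, ker_conjNormal]

theorem map_mk'_self_sup (H : Subgroup G) :
    (R ⊔ H).map (QuotientGroup.mk' R) = H.map (QuotientGroup.mk' R) := by
  rw [map_sup, QuotientGroup.map_mk'_self, bot_sup_eq]

end Subgroup

open Subgroup in
/-- If `R ⊴ G` has trivial center, the centralizer `Λ` of `R` in `G` is normal in `G` and the
quotient map `π : G → G/R` restricts on `Λ` to an isomorphism onto the kernel of the
monodromy morphism `G/R → Out(R)` (induced by conjugation). -/
theorem centralizer_normal_and_iso_monodromy_kernel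
    (G : Type*) [Group G] (R : Subgroup G) [R.Normal]
    (hcenter : Subgroup.center ↥R = ⊥)
    (ρ : G ⧸ R →* OutAut ↥R)
    (hρ : ∀ g : G, ρ (QuotientGroup.mk g) =
      QuotientGroup.mk (s := innerAut ↥R) (MulAut.conjNormal g)) :
    (Subgroup.centralizer (R : Set G)).Normal ∧
    Function.Injective
      (fun x : ↥(Subgroup.centralizer (R : Set G)) => QuotientGroup.mk' R (x : G)) ∧
    Subgroup.map (QuotientGroup.mk' R) (Subgroup.centralizer (R : Set G)) = ρ.ker := by
  refine ⟨inferInstance, ?_, ?_⟩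
  · have hker : ((QuotientGroup.mk' R).domRestrict (centralizer (R : Set G))).ker = ⊥ := by
      rw [MonoidHom.ker_domRestrict, QuotientGroup.ker_mk', subgroupOf_eq_bot]
      exact disjoint_centralizer_self_of_center_eq_bot hcenter
    exact (MonoidHom.ker_eq_bot_iff _).mp hker
  · have hcomap : ρ.ker.comap (QuotientGroup.mk' R) =
        (innerAut R).comap (MulAut.conjNormal : G →* MulAut R) := by
      ext g
      simp only [mem_comap, MonoidHom.mem_ker, QuotientGroup.mk'_apply, hρ]
      exact QuotientGroup.eq_one_iff _
    rw [← map_comap_eq_self_of_surjective (QuotientGroup.mk'_surjective R) ρ.ker, hcomap,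
      comap_conjNormal_innerAut_eq_sup_centralizer, map_mk'_self_sup]
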